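/- arXiv:2201.01419 — 2 statements merged into one kernel-verified Lean document; each statement's English description precedes it below -/
import Mathlib

section
/- Assume n ≤ m and v_max < μ. If π* is an optimal allocation, then for every agent i it holds that μ/2 < V_i(π*) < 2μ. -/
/-- The valuation of agent `i` under allocation `π`: the sum of utilities of goods assigned to `i`. -/
def V {G A : Type*} [Fintype G] [DecidableEq A] (v : G → ℝ) (π : G → A) (i : A) : ℝ :=
  ∑ j ∈ Finset.univ.filter (fun j => π j = i), v j

/-- Nash social welfare: geometric mean of agents' valuations. -/
noncomputable def NSW {G A : Type*} [Fintype G] [Fintype A] [DecidableEq A]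
    (v : G → ℝ) (π : G → A) : ℝ :=
  (∏ i, V v π i) ^ ((1 : ℝ) / (Fintype.card A))

open Finset

lemma sum_V {n m : ℕ} (v : Fin m → ℝ) (π : Fin m → Fin n) :
    ∑ i, V v π i = ∑ j, v j := by
  unfold V
  exact Finset.sum_fiberwise _ _ _

lemma V_nonneg {n m : ℕ} (v : Fin m → ℝ) (hv : ∀ j, 0 < v j) (π : Fin m → Fin n) (i : Fin n) :
    0 ≤ V v π i :=
  Finset.sum_nonneg fun j _ => (hv j).le

lemma V_update {n m : ℕ} (v : Fin m → ℝ) (π : Fin m → Fin n) (j0 : Fin m) (b i : Fin n) :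
    V v (Function.update π j0 b) i
      = V v π i + (if b = i then v j0 else 0) - (if π j0 = i then v j0 else 0) := by
  classical
  unfold V
  rw [Finset.sum_filter, Finset.sum_filter]
  have hfun : (fun j => if Function.update π j0 b j = i then v j else 0)
      = Function.update (fun j => if π j = i then v j else 0) j0 (if b = i then v j0 else 0) := by
    funext j
    by_cases h : j = j0
    · subst h; simp [Function.update]
    · simp [Function.update, h]
  rw [hfun, Finset.sum_update_of_mem (Finset.mem_univ j0)]
  have hsplit : ∑ j, (if π j = i then v j else 0)
      = (if π j0 = i then v j0 else 0) + ∑ j ∈ Finset.univ \ {j0}, (if π j = i then v j else 0) := by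
    rw [Finset.sdiff_singleton_eq_erase]
    exact (Finset.add_sum_erase Finset.univ (fun j => if π j = i then v j else 0)
      (Finset.mem_univ j0)).symm
  rw [hsplit]
  ring

lemma swap_lt {n m : ℕ} (v : Fin m → ℝ) (_hv : ∀ j, 0 < v j) (π : Fin m → Fin n)
    (hVpos : ∀ k, 0 < V v π k) (j0 : Fin m) (b : Fin n) (hb : b ≠ π j0)
    (himp : V v π (π j0) * V v π b < (V v π (π j0) - v j0) * (V v π b + v j0)) :
    ∏ k, V v π k < ∏ k, V v (Function.update π j0 b) k := by
  classical
  set a := π j0 with ha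
  set π' := Function.update π j0 b with hπ'
  have hVa : V v π' a = V v π a - v j0 := by
    rw [V_update]; simp [hb]
    intro h; exact absurd ha.symm h
  have hVb : V v π' b = V v π b + v j0 := by
    rw [V_update]; simp [Ne.symm hb]
    intro h; exact absurd (h.symm.trans ha.symm) hb
  have hVk : ∀ k, k ≠ a → k ≠ b → V v π' k = V v π k := by
    intro k hka hkb
    rw [V_update]
    simp [Ne.symm hkb, ← ha, Ne.symm hka]
  have hbmem : b ∈ Finset.univ.erase a := Finset.mem_erase.2 ⟨hb, Finset.mem_univ b⟩
  have hsplit : ∀ f : Fin n → ℝ, ∏ k, f k = f a * (f b * ∏ k ∈ (Finset.univ.erase a).erase b, f k) := by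
    intro f
    rw [Finset.mul_prod_erase _ _ hbmem, Finset.mul_prod_erase _ _ (Finset.mem_univ a)]
  rw [hsplit (V v π'), hsplit (V v π), hVa, hVb]
  have hR : ∏ k ∈ (Finset.univ.erase a).erase b, V v π' k
      = ∏ k ∈ (Finset.univ.erase a).erase b, V v π k := by
    apply Finset.prod_congr rfl
    intro k hk
    have hk1 := Finset.mem_erase.1 hk
    have hk2 := Finset.mem_erase.1 hk1.2
    exact hVk k hk2.1 hk1.1
  rw [hR]
  have hRpos : 0 < ∏ k ∈ (Finset.univ.erase a).erase b, V v π k :=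
    Finset.prod_pos fun k _ => hVpos k
  have := mul_lt_mul_of_pos_right himp hRpos
  nlinarith [this]

/-- If `v_max < μ`, then in an optimal allocation every agent's valuation lies in `(μ/2, 2μ)`. -/
theorem stmt2 (n m : ℕ) (hn : 0 < n) (hnm : n ≤ m)
    (v : Fin m → ℝ) (hv : ∀ j, 0 < v j)
    (vmax : ℝ) (hvmax : IsGreatest (Set.range v) vmax)
    (hlt : vmax < (∑ j, v j) / n)
    (πs : Fin m → Fin n)
    (hopt : ∀ π : Fin m → Fin n, NSW v π ≤ NSW v πs)
    (i : Fin n) :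
    (∑ j, v j) / n / 2 < V v πs i ∧ V v πs i < 2 * ((∑ j, v j) / n) := by
  classical
  set μ : ℝ := (∑ j, v j) / n with hμ
  have hnR : (0 : ℝ) < n := Nat.cast_pos.2 hn
  have hexp : (0 : ℝ) < 1 / n := by positivity
  have hvmax_le : ∀ j, v j ≤ vmax := fun j => hvmax.2 ⟨j, rfl⟩
  have hvmaxpos : 0 < vmax := by
    obtain ⟨j, hj⟩ := hvmax.1
    exact hj ▸ hv j
  have hμpos : 0 < μ := lt_trans hvmaxpos hlt
  -- a baseline allocation with positive NSW
  have hm : 0 < m := lt_of_lt_of_le hn hnm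
  set π₀ : Fin m → Fin n := fun j => if h : (j : ℕ) < n then ⟨j, h⟩ else ⟨0, hn⟩ with hπ₀
  have hπ₀pos : ∀ k, 0 < V v π₀ k := by
    intro k
    have hkm : (k : ℕ) < m := lt_of_lt_of_le k.2 hnm
    apply Finset.sum_pos (fun j _ => hv j)
    refine ⟨⟨k, hkm⟩, Finset.mem_filter.2 ⟨Finset.mem_univ _, ?_⟩⟩
    simp [hπ₀, k.2, Fin.ext_iff]
  have hNSW₀ : 0 < NSW v π₀ :=
    Real.rpow_pos_of_pos (Finset.prod_pos fun k _ => hπ₀pos k) _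
  have hcard : (Fintype.card (Fin n) : ℝ) = n := by simp
  -- the optimal allocation has all positive valuations
  have hPpos : 0 < ∏ k, V v πs k := by
    by_contra h
    push_neg at h
    have h0 : ∏ k, V v πs k = 0 :=
      le_antisymm h (Finset.prod_nonneg fun k _ => V_nonneg v hv πs k)
    have : NSW v πs = 0 := by
      rw [NSW, h0, Real.zero_rpow]
      rw [hcard]
      positivity
    linarith [hopt π₀, hNSW₀, this]
  have hVpos : ∀ k, 0 < V v πs k := by
    intro k
    rcases lt_or_ge 0 (V v πs k) with h | h
    · exact h
    · exfalso
      have h0 : V v πs k = 0 := le_antisymm h (V_nonneg v hv πs k)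
      have : ∏ k, V v πs k = 0 := Finset.prod_eq_zero (Finset.mem_univ k) h0
      linarith
  have hsum : ∑ k, V v πs k = n * μ := by
    rw [sum_V, hμ]; field_simp
  -- main tool: a strictly improving swap contradicts optimality
  have hswap : ∀ (j0 : Fin m) (b : Fin n), b ≠ πs j0 →
      V v πs (πs j0) * V v πs b < (V v πs (πs j0) - v j0) * (V v πs b + v j0) → False := by
    intro j0 b hb himp
    have hprod := swap_lt v hv πs hVpos j0 b hb himp
    have : NSW v πs < NSW v (Function.update πs j0 b) := by
      rw [NSW, NSW, hcard]
      exact Real.rpow_lt_rpow hPpos.le hprod hexp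
    linarith [hopt (Function.update πs j0 b)]
  constructor
  · -- lower bound
    by_contra h
    push_neg at h
    have hiμ : V v πs i < μ := lt_of_le_of_lt h (by linarith)
    -- there is an agent with valuation > μ
    have hex : ∃ a, μ < V v πs a := by
      by_contra hno
      push_neg at hno
      have : ∑ k, V v πs k < ∑ _k : Fin n, μ :=
        Finset.sum_lt_sum (fun k _ => hno k) ⟨i, Finset.mem_univ i, hiμ⟩
      rw [hsum] at this
      simp only [Finset.sum_const, Finset.card_univ, Fintype.card_fin, nsmul_eq_mul] at this
      linarith
    obtain ⟨a, haμ⟩ := hex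
    have hai : a ≠ i := fun hai => by rw [hai] at haμ; linarith
    set t := Finset.univ.filter (fun j => πs j = a) with ht
    have hVat : V v πs a = ∑ j ∈ t, v j := rfl
    -- a owns at least two goods
    have htcard : 2 ≤ t.card := by
      by_contra hc
      push_neg at hc
      have h1 : t.card ≤ 1 := Nat.lt_succ_iff.1 hc
      have hle : ∑ j ∈ t, v j ≤ t.card • vmax :=
        Finset.sum_le_card_nsmul t v vmax (fun j _ => hvmax_le j)
      rw [nsmul_eq_mul] at hle
      have hcast : (t.card : ℝ) ≤ 1 := by exact_mod_cast h1
      have : V v πs a ≤ vmax := by rw [hVat]; nlinarith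
      linarith
    have htne : t.Nonempty := Finset.card_pos.1 (by omega)
    obtain ⟨j0, hj0t, hj0min⟩ := Finset.exists_min_image t v htne
    have hπj0 : πs j0 = a := (Finset.mem_filter.1 hj0t).2
    -- v j0 ≤ V a / 2
    have h2v : 2 * v j0 ≤ V v πs a := by
      have := Finset.card_nsmul_le_sum t v (v j0) (fun j hj => hj0min j hj)
      rw [nsmul_eq_mul] at this
      have h2 : (2 : ℝ) ≤ (t.card : ℝ) := by exact_mod_cast htcard
      rw [hVat]
      nlinarith [hv j0]
    refine hswap j0 i (by rw [hπj0]; exact fun h => hai h.symm) ?_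
    rw [hπj0]
    have hvj0 := hv j0
    nlinarith [hVpos i]
  · -- upper bound
    by_contra h
    push_neg at h
    -- there is an agent with valuation < μ
    have hex : ∃ b, V v πs b < μ := by
      by_contra hno
      push_neg at hno
      have : ∑ _k : Fin n, μ < ∑ k, V v πs k :=
        Finset.sum_lt_sum (fun k _ => hno k) ⟨i, Finset.mem_univ i, by linarith⟩
      rw [hsum] at this
      simp only [Finset.sum_const, Finset.card_univ, Fintype.card_fin, nsmul_eq_mul] at this
      linarith
    obtain ⟨b, hbμ⟩ := hex
    have hbi : b ≠ i := fun hbi => by rw [hbi] at hbμ; linarith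
    -- i owns a good
    have hne : (Finset.univ.filter (fun j => πs j = i)).Nonempty := by
      by_contra hno
      rw [Finset.not_nonempty_iff_eq_empty] at hno
      have : V v πs i = 0 := by rw [V, hno]; simp
      linarith [hVpos i]
    obtain ⟨j0, hj0⟩ := hne
    have hπj0 : πs j0 = i := (Finset.mem_filter.1 hj0).2
    refine hswap j0 b (by rw [hπj0]; exact hbi) ?_
    rw [hπj0]
    have hvj0le : v j0 ≤ vmax := hvmax_le j0
    have hvj0 := hv j0
    nlinarith [hVpos b]
end

section
/- Assume 2 ≤ n ≤ m and let j be a good with v_j ≥ μ. Then the maximum over all allocations π of the product ∏_{i=1}^{n} V_i(π) equals v_j times the maximum over all allocations π' of the reduced instance (with agents indexed by Fin (n−1) and goods G ∖ {j}) of the product ∏_{i'} V_{i'}(π'). In other words, an optimal allocation of the original instance is obtained by giving good j alone to one agent and allocating the remaining goods optimally among the remaining n−1 agents. -/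
open Finset

section Valuation

variable {G A B : Type*} [Fintype G] [DecidableEq A] [DecidableEq B]

lemma V_eq_sum_ite (v : G → ℝ) (π : G → A) (i : A) :
    V v π i = ∑ x, if π x = i then v x else 0 := by
  rw [V, sum_filter]

lemma V_nonneg_s13 {v : G → ℝ} (hv : ∀ x, 0 ≤ v x) (π : G → A) (i : A) : 0 ≤ V v π i :=
  sum_nonneg fun x _ => hv x

lemma le_V_apply {v : G → ℝ} (hv : ∀ x, 0 ≤ v x) (π : G → A) (x : G) : v x ≤ V v π (π x) :=
  single_le_sum (fun y _ => hv y) (by simp)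

lemma sum_V_s13 [Fintype A] (v : G → ℝ) (π : G → A) : ∑ i, V v π i = ∑ x, v x :=
  sum_fiberwise univ π v

lemma V_comp_equiv (v : G → ℝ) (π : G → A) (e : A ≃ B) (i : A) :
    V v (e ∘ π) (e i) = V v π i := by
  simp [V]

lemma prod_V_comp_equiv [Fintype A] [Fintype B] (v : G → ℝ) (π : G → A) (e : A ≃ B) :
    ∏ i, V v (e ∘ π) i = ∏ i, V v π i := by
  rw [← e.prod_comp]
  simp only [V_comp_equiv]

lemma V_reassign [DecidableEq G] (v : G → ℝ) (π : G → A) (T : Finset G) {a : A}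
    (hT : ∀ x ∈ T, π x = a) (b i : A) :
    V v (fun x => if x ∈ T then b else π x) i + (if i = a then ∑ x ∈ T, v x else 0)
      = V v π i + (if i = b then ∑ x ∈ T, v x else 0) := by
  have key : ∀ x, (if (if x ∈ T then b else π x) = i then v x else 0)
      + (if i = a then (if x ∈ T then v x else 0) else 0)
      = (if π x = i then v x else 0) + (if i = b then (if x ∈ T then v x else 0) else 0) := by
    intro x
    by_cases hx : x ∈ T
    · simp only [hx, hT x hx, if_true]
      by_cases hb : b = i <;> by_cases ha : a = i <;> simp [hb, ha, eq_comm]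
    · simp [hx]
  have hsumT : ∑ x ∈ T, v x = ∑ x, if x ∈ T then v x else 0 := by
    rw [sum_ite_mem, univ_inter]
  rw [V_eq_sum_ite, V_eq_sum_ite, hsumT]
  simpa only [sum_add_distrib, sum_ite_irrel, sum_const_zero] using
    sum_congr rfl fun x _ => key x

lemma prod_le_prod_of_eq_off_pair {R : Type*} [CommSemiring R] [PartialOrder R]
    [IsOrderedRing R] [Fintype A] {f g : A → R} {a b : A} (hab : a ≠ b) (hf : ∀ i, 0 ≤ f i)
    (hfg : ∀ i, i ≠ a → i ≠ b → f i = g i) (h : f a * f b ≤ g a * g b) :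
    ∏ i, f i ≤ ∏ i, g i := by
  have hb : b ∈ univ.erase a := mem_erase.2 ⟨hab.symm, mem_univ b⟩
  have hrest : ∏ i ∈ (univ.erase a).erase b, f i = ∏ i ∈ (univ.erase a).erase b, g i :=
    prod_congr rfl fun i hi => hfg i (ne_of_mem_erase (mem_of_mem_erase hi)) (ne_of_mem_erase hi)
  rw [← mul_prod_erase univ f (mem_univ a), ← mul_prod_erase _ f hb,
    ← mul_prod_erase univ g (mem_univ a), ← mul_prod_erase _ g hb, ← mul_assoc, ← mul_assoc,
    hrest]
  exact mul_le_mul_of_nonneg_right h (hrest ▸ prod_nonneg fun i _ => hf i)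

lemma exists_ne_V_le [Fintype A] [Nontrivial A] {v : G → ℝ} (hv : ∀ x, 0 ≤ v x) {j : G}
    (hj : ∑ x, v x ≤ Fintype.card A * v j) (π : G → A) : ∃ b ≠ π j, V v π b ≤ v j := by
  have hsum : ∑ i ∈ univ.erase (π j), V v π i ≤ ∑ _i ∈ univ.erase (π j), v j := by
    have := add_sum_erase univ (V v π) (mem_univ (π j))
    rw [sum_V_s13] at this
    rw [sum_const, card_erase_of_mem (mem_univ _), card_univ, nsmul_eq_mul,
      Nat.cast_pred Fintype.card_pos]
    linarith [le_V_apply hv π j]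
  obtain ⟨b, hb⟩ := exists_ne (π j)
  obtain ⟨b, hb, hVb⟩ := exists_le_of_sum_le ⟨b, mem_erase.2 ⟨hb, mem_univ b⟩⟩ hsum
  exact ⟨b, ne_of_mem_erase hb, hVb⟩

lemma exists_isolating_le_prod_V [DecidableEq G] [Fintype A] [Nontrivial A] {v : G → ℝ}
    (hv : ∀ x, 0 ≤ v x) {j : G} (hj : ∑ x, v x ≤ Fintype.card A * v j) (π : G → A) :
    ∃ ρ : G → A, ρ j = π j ∧ (∀ x ≠ j, ρ x ≠ π j) ∧ ∏ i, V v π i ≤ ∏ i, V v ρ i := by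
  obtain ⟨b, hb, hVb⟩ := exists_ne_V_le hv hj π
  set T := (univ.filter (π · = π j)).erase j
  have hT : ∀ x ∈ T, π x = π j := fun x hx => (mem_filter.1 (mem_of_mem_erase hx)).2
  have hVa : V v π (π j) = v j + ∑ x ∈ T, v x :=
    (add_sum_erase _ v (by simp)).symm
  refine ⟨fun x => if x ∈ T then b else π x, by simp [T], fun x hx => ?_, ?_⟩
  · by_cases hxT : x ∈ T
    · simpa [hxT] using hb
    · simp only [hxT, if_false]
      exact fun h => hxT (mem_erase.2 ⟨hx, mem_filter.2 ⟨mem_univ x, h⟩⟩)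
  · have hV := V_reassign v π T hT b
    refine prod_le_prod_of_eq_off_pair hb.symm (V_nonneg_s13 hv π) (fun i hia hib => ?_) ?_
    · simpa [hia, hib] using (hV i).symm
    · have h1 := hV (π j)
      have h2 := hV b
      simp only [ite_true, if_neg hb, if_neg hb.symm, add_zero] at h1 h2
      have hS : 0 ≤ ∑ x ∈ T, v x := sum_nonneg fun x _ => hv x
      rw [hVa] at h1 ⊢
      rw [show V v _ (π j) = v j by linarith, h2]
      nlinarith [mul_le_mul_of_nonneg_left hVb hS]

def nswValues (v : G → ℝ) (A : Type*) [Fintype A] [DecidableEq A] : Set ℝ :=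
  {x | ∃ π : G → A, x = ∏ i, V v π i}

lemma nswValues_subset_of_equiv [Fintype A] [Fintype B] (v : G → ℝ) (e : A ≃ B) :
    nswValues v A ⊆ nswValues v B := by
  rintro _ ⟨π, rfl⟩
  exact ⟨e ∘ π, (prod_V_comp_equiv v π e).symm⟩

lemma nswValues_congr [Fintype A] [Fintype B] (v : G → ℝ) (e : A ≃ B) :
    nswValues v A = nswValues v B :=
  (nswValues_subset_of_equiv v e).antisymm (nswValues_subset_of_equiv v e.symm)

end Valuation

section Extend

variable {G A : Type*} [DecidableEq G] {j : G} {a : A}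

def extendAlloc (j : G) (a : A) (π' : {x // x ≠ j} → {i // i ≠ a}) : G → A :=
  fun x => if h : x = j then a else π' ⟨x, h⟩

@[simp]
lemma extendAlloc_self (π' : {x // x ≠ j} → {i // i ≠ a}) : extendAlloc j a π' j = a :=
  dif_pos rfl

@[simp]
lemma extendAlloc_coe (π' : {x // x ≠ j} → {i // i ≠ a}) (x : {x // x ≠ j}) :
    extendAlloc j a π' x = π' x :=
  dif_neg x.2

lemma extendAlloc_restrict (ρ : G → A) (hρj : ρ j = a) (hρ : ∀ x ≠ j, ρ x ≠ a) :
    extendAlloc j a (fun x => ⟨ρ x, hρ x x.2⟩) = ρ := by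
  funext x
  by_cases h : x = j
  · simp [extendAlloc, h, hρj]
  · simp [extendAlloc, h]

end Extend

section Reduction

variable {G A : Type*} [Fintype G] [DecidableEq G] [DecidableEq A] {j : G} {a : A}

lemma V_extendAlloc_self (v : G → ℝ) (π' : {x // x ≠ j} → {i // i ≠ a}) :
    V v (extendAlloc j a π') a = v j := by
  have hfiber : univ.filter (fun x => extendAlloc j a π' x = a) = {j} := by
    ext x
    by_cases h : x = j <;> simp [extendAlloc, h, (π' _).2]
  rw [V, hfiber, sum_singleton]

lemma V_extendAlloc_coe (v : G → ℝ) (π' : {x // x ≠ j} → {i // i ≠ a}) (i : {i // i ≠ a}) :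
    V v (extendAlloc j a π') i = V (fun x : {x // x ≠ j} => v x) π' i := by
  rw [V_eq_sum_ite, V_eq_sum_ite, Fintype.sum_eq_add_sum_subtype_ne _ j, extendAlloc_self,
    if_neg (Ne.symm i.2), zero_add]
  simp only [extendAlloc_coe, Subtype.coe_inj]

lemma prod_V_extendAlloc [Fintype A] (v : G → ℝ) (π' : {x // x ≠ j} → {i // i ≠ a}) :
    ∏ i, V v (extendAlloc j a π') i = v j * ∏ i, V (fun x : {x // x ≠ j} => v x) π' i := by
  simp only [Fintype.prod_eq_mul_prod_subtype_ne _ a, V_extendAlloc_self, V_extendAlloc_coe]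

variable [Fintype A] {v : G → ℝ}

lemma mul_mem_nswValues {q : ℝ} (hq : q ∈ nswValues (fun x : {x // x ≠ j} => v x) {i // i ≠ a}) :
    v j * q ∈ nswValues v A := by
  obtain ⟨π', rfl⟩ := hq
  exact ⟨extendAlloc j a π', (prod_V_extendAlloc v π').symm⟩

lemma exists_mem_nswValues_le_mul [Nontrivial A] (hv : ∀ x, 0 ≤ v x)
    (hj : ∑ x, v x ≤ Fintype.card A * v j) {p : ℝ} (hp : p ∈ nswValues v A) :
    ∃ q ∈ nswValues (fun x : {x // x ≠ j} => v x) {i // i ≠ a}, p ≤ v j * q := by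
  obtain ⟨π, rfl⟩ := hp
  obtain ⟨ρ, hρj, hρ, hle⟩ := exists_isolating_le_prod_V hv hj (Equiv.swap (π j) a ∘ π)
  simp only [Function.comp_apply, Equiv.swap_apply_left] at hρj hρ
  refine ⟨_, ⟨fun x => ⟨ρ x, hρ x x.2⟩, rfl⟩, ?_⟩
  rwa [← prod_V_extendAlloc, extendAlloc_restrict ρ hρj,
    ← prod_V_comp_equiv v π (Equiv.swap (π j) a)]

theorem eq_mul_of_isGreatest_nswValues [Nontrivial A] (hv : ∀ x, 0 ≤ v x)
    (hj : ∑ x, v x ≤ Fintype.card A * v j) {P Q : ℝ} (hP : IsGreatest (nswValues v A) P)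
    (hQ : IsGreatest (nswValues (fun x : {x // x ≠ j} => v x) {i // i ≠ a}) Q) :
    P = v j * Q := by
  obtain ⟨q, hq, hPq⟩ := exists_mem_nswValues_le_mul (a := a) hv hj hP.1
  exact le_antisymm (hPq.trans (mul_le_mul_of_nonneg_left (hQ.2 hq) (hv j)))
    (hP.2 (mul_mem_nswValues hQ.1))

end Reduction

theorem stmt13_general (n m : ℕ) (hn : 2 ≤ n)
    (v : Fin m → ℝ) (hv : ∀ j, 0 < v j)
    (j : Fin m) (hj : v j ≥ (∑ j', v j') / n)
    (P Q : ℝ)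
    (hP : IsGreatest {x : ℝ | ∃ π : Fin m → Fin n, x = ∏ i, V v π i} P)
    (hQ : IsGreatest {x : ℝ | ∃ π' : {j' : Fin m // j' ≠ j} → Fin (n - 1),
        x = ∏ i', V (fun j' : {j' : Fin m // j' ≠ j} => v j'.val) π' i'} Q) :
    P = v j * Q := by
  have : Nontrivial (Fin n) := Fin.nontrivial_iff_two_le.2 hn
  let a : Fin n := ⟨0, by omega⟩
  have e : Fin (n - 1) ≃ {i : Fin n // i ≠ a} := Fintype.equivOfCardEq (by simp)
  refine eq_mul_of_isGreatest_nswValues (a := a) (fun x => (hv x).le) ?_ hP ?_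
  · rw [ge_iff_le, div_le_iff₀ (by positivity)] at hj
    simpa [mul_comm] using hj
  · rwa [← nswValues_congr _ e]

/-- If `v j ≥ μ`, the maximum product of valuations of the full instance equals `v j` times
the maximum product of valuations of the reduced instance obtained by removing good `j`
and one agent. -/
theorem stmt13 (n m : ℕ) (hn : 2 ≤ n) (hnm : n ≤ m)
    (v : Fin m → ℝ) (hv : ∀ j, 0 < v j)
    (j : Fin m) (hj : v j ≥ (∑ j', v j') / n)
    (P Q : ℝ)
    (hP : IsGreatest {x : ℝ | ∃ π : Fin m → Fin n, x = ∏ i, V v π i} P)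
    (hQ : IsGreatest {x : ℝ | ∃ π' : {j' : Fin m // j' ≠ j} → Fin (n - 1),
        x = ∏ i', V (fun j' : {j' : Fin m // j' ≠ j} => v j'.val) π' i'} Q) :
    P = v j * Q :=
  stmt13_general n m hn v hv j hj P Q hP hQ
end
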